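/- Let S, T ∈ B_A(H) and q a nonzero complex number with |q| ≤ 1. Then |q|²·w_{q,A}(TS) ≤ 4·w_{q,A}(T)·w_{q,A}(S). -/

import Mathlib

open scoped InnerProductSpace

variable {H : Type*} [NormedAddCommGroup H] [InnerProductSpace ℂ H] [CompleteSpace H]

/-- The semi-inner product induced by `A`: `⟨x,y⟩_A = ⟨Ax,y⟩`
(linear in the first argument, as in the paper). -/
noncomputable def sip (A : H →L[ℂ] H) (x y : H) : ℂ := @inner ℂ H _ y (A x)

/-- The seminorm induced by `A`. -/
noncomputable def normA (A : H →L[ℂ] H) (x : H) : ℝ := Real.sqrt (sip A x x).re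

/-- The `A`-`q`-numerical radius of `T`. -/
noncomputable def wqA (A T : H →L[ℂ] H) (q : ℂ) : ℝ :=
  sSup {r : ℝ | ∃ x y : H, normA A x = 1 ∧ normA A y = 1 ∧ sip A x y = q ∧
    r = ‖sip A (T x) y‖}

/-- The `A`-operator seminorm of `T`. -/
noncomputable def opNormA (A T : H →L[ℂ] H) : ℝ :=
  sSup {r : ℝ | ∃ x ∈ closure (Set.range fun v => A v), x ≠ 0 ∧ r = normA A (T x) / normA A x}

/-!
Write `⟨x, y⟩_A = ⟨B y, B x⟩` with `B = A^{1/2}`. An operator `T` with an `A`-adjoint `W` is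
`A`-bounded: `R = W T` is `A`-selfadjoint, so Cauchy–Schwarz gives
`‖R^k x‖_A ^ 2 ≤ ‖x‖_A ‖R^(2k) x‖_A`; iterating along `k = 2^n` against the crude bound
`‖R^k x‖_A ≤ ‖B‖ ‖R‖^k ‖x‖` yields `‖R x‖_A ≤ ‖R‖ ‖x‖_A`. So the supremum defining
`w_{q,A}(T)` is finite.

For an `A`-unit `e` there is an `A`-unit `f` that is `A`-orthogonal to `e`, since
`dim R(A) ≥ 2`. Both `y = q̄ e ± √(1 - |q|²) f` satisfy `⟨e, y⟩_A = q`, and averaging the two gives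
`|q| |⟨Te, e⟩_A| ≤ w_{q,A}(T)`. Polarization then yields
`|⟨Tu, v⟩_A| ≤ 2 (w_{q,A}(T) / |q|) ‖u‖_A ‖v‖_A`. Applied to `S` this gives
`‖S x‖_A ≤ 2 w_{q,A}(S) / |q|` on `A`-unit vectors, and applied to `T` at `(S x, y)` it bounds
`|⟨T S x, y⟩_A|` by `4 w_{q,A}(T) w_{q,A}(S) / |q|²`.
-/

open ComplexConjugate Filter
open scoped InnerProduct

theorem le_of_forall_pow_le_mul_pow {a d M : ℝ} {k : ℕ → ℕ} (hk : Tendsto k atTop atTop)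
    (hd : 0 ≤ d) (h : ∀ n, a ^ k n ≤ M * d ^ k n) : a ≤ d := by
  by_contra! hda
  have ha : 0 < a := hd.trans_lt hda
  have hlim : Tendsto (fun n => M * (d / a) ^ k n) atTop (nhds 0) := by
    simpa using ((tendsto_pow_atTop_nhds_zero_of_lt_one (div_nonneg hd ha.le)
      ((div_lt_one ha).2 hda)).comp hk).const_mul M
  obtain ⟨n, hn⟩ := (hlim.eventually (gt_mem_nhds one_pos)).exists
  rw [div_pow, mul_div_assoc', div_lt_one (by positivity)] at hn
  exact (h n).not_gt hn

theorem le_mul_of_sq_le_mul_succ {u : ℕ → ℝ} {c r K : ℝ} (hu : ∀ n, 0 ≤ u n) (hc : 0 ≤ c)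
    (hr : 0 ≤ r) (hstep : ∀ n, u n ^ 2 ≤ c * u (n + 1)) (hbound : ∀ n, u n ≤ K * r ^ 2 ^ n) :
    u 0 ≤ c * r := by
  rcases hc.eq_or_lt with rfl | hc
  · simp [show u 0 = 0 by simpa using hstep 0]
  have hpow : ∀ n, (u 0 / c) ^ 2 ^ n ≤ u n / c := by
    intro n
    induction n with
    | zero => simp
    | succ n ih =>
      calc (u 0 / c) ^ 2 ^ (n + 1) = ((u 0 / c) ^ 2 ^ n) ^ 2 := by rw [pow_succ, pow_mul]
        _ ≤ (u n / c) ^ 2 := by gcongr; exact pow_nonneg (div_nonneg (hu 0) hc.le) _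
        _ ≤ u (n + 1) / c := by
          rw [div_pow, sq c, ← div_div, div_le_div_iff_of_pos_right hc, div_le_iff₀' hc]
          exact hstep n
  have : u 0 / c ≤ r := le_of_forall_pow_le_mul_pow (M := K / c)
    (tendsto_pow_atTop_atTop_of_one_lt one_lt_two) hr fun n =>
      (hpow n).trans (by rw [div_mul_eq_mul_div, div_le_div_iff_of_pos_right hc]; exact hbound n)
  rwa [div_le_iff₀' hc] at this

section SemiInner

variable {V : Type*} [NormedAddCommGroup V] [InnerProductSpace ℂ V]

theorem sip_smul_left (A : V →L[ℂ] V) (c : ℂ) (x y : V) : sip A (c • x) y = c * sip A x y := by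
  simp [sip]

theorem sip_smul_right (A : V →L[ℂ] V) (c : ℂ) (x y : V) :
    sip A x (c • y) = conj c * sip A x y := by
  simp [sip, mul_comm]

theorem sip_add_right (A : V →L[ℂ] V) (x y z : V) : sip A x (y + z) = sip A x y + sip A x z := by
  simp [sip]

theorem normA_nonneg (A : V →L[ℂ] V) (x : V) : 0 ≤ normA A x := Real.sqrt_nonneg _

theorem sip_pow_apply_left {A R : V →L[ℂ] V} (hR : ∀ x y, sip A (R x) y = sip A x (R y)) (k : ℕ)
    (x y : V) : sip A ((R ^ k) x) y = sip A x ((R ^ k) y) := by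
  induction k generalizing x y with
  | zero => rfl
  | succ k ih =>
    calc sip A ((R ^ (k + 1)) x) y = sip A ((R ^ k) (R x)) y := by rw [pow_succ]; rfl
      _ = sip A x (R ((R ^ k) y)) := by rw [ih, hR]
      _ = sip A x ((R ^ (k + 1)) y) := by rw [pow_succ']; rfl

theorem wqA_nonneg (A T : V →L[ℂ] V) (q : ℂ) : 0 ≤ wqA A T q :=
  Real.sSup_nonneg fun _ ⟨_, _, _, _, _, hr⟩ => hr ▸ norm_nonneg _

theorem wqA_le {A T : V →L[ℂ] V} {q : ℂ} {c : ℝ} (hc : 0 ≤ c)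
    (h : ∀ x y, normA A x = 1 → normA A y = 1 → sip A x y = q → ‖sip A (T x) y‖ ≤ c) :
    wqA A T q ≤ c :=
  Real.sSup_le (fun _ ⟨x, y, hx, hy, hxy, hr⟩ => hr ▸ h x y hx hy hxy) hc

theorem norm_sip_ofReal_smul (A T : V →L[ℂ] V) (a b : ℝ) (x y : V) :
    ‖sip A (T ((a : ℂ) • x)) ((b : ℂ) • y)‖ = |a| * |b| * ‖sip A (T x) y‖ := by
  rw [map_smul, sip_smul_left, sip_smul_right, norm_mul, norm_mul, Complex.norm_conj,
    Complex.norm_real, Complex.norm_real, Real.norm_eq_abs, Real.norm_eq_abs, mul_assoc]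

variable [CompleteSpace V] {E : Type*} [NormedAddCommGroup E] [InnerProductSpace ℂ E]
  [CompleteSpace E] {A : V →L[ℂ] V} {B : V →L[ℂ] E}

theorem sip_eq_inner (hAB : A = B† ∘L B) (x y : V) : sip A x y = ⟪B y, B x⟫_ℂ := by
  rw [sip, hAB, ContinuousLinearMap.comp_apply, ContinuousLinearMap.adjoint_inner_right]

theorem normA_eq_norm (hAB : A = B† ∘L B) (x : V) : normA A x = ‖B x‖ := by
  rw [normA, sip_eq_inner hAB, inner_self_eq_norm_sq_to_K]
  norm_cast
  exact Real.sqrt_sq (norm_nonneg _)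

theorem sip_self (hAB : A = B† ∘L B) (x : V) : sip A x x = ((normA A x ^ 2 : ℝ) : ℂ) := by
  rw [sip_eq_inner hAB, normA_eq_norm hAB, inner_self_eq_norm_sq_to_K]
  norm_cast

theorem norm_sip_self (hAB : A = B† ∘L B) (x : V) : ‖sip A x x‖ = normA A x ^ 2 := by
  rw [sip_self hAB, Complex.norm_real, Real.norm_of_nonneg (sq_nonneg _)]

theorem norm_sip_le (hAB : A = B† ∘L B) (x y : V) : ‖sip A x y‖ ≤ normA A x * normA A y := by
  rw [sip_eq_inner hAB, normA_eq_norm hAB, normA_eq_norm hAB, mul_comm]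
  exact norm_inner_le_norm _ _

theorem conj_sip (hAB : A = B† ∘L B) (x y : V) : conj (sip A x y) = sip A y x := by
  rw [sip_eq_inner hAB, sip_eq_inner hAB, inner_conj_symm]

theorem normA_smul (hAB : A = B† ∘L B) (c : ℂ) (x : V) : normA A (c • x) = ‖c‖ * normA A x := by
  rw [normA_eq_norm hAB, normA_eq_norm hAB, map_smul, norm_smul]

theorem normA_le (hAB : A = B† ∘L B) (x : V) : normA A x ≤ ‖B‖ * ‖x‖ := by
  rw [normA_eq_norm hAB]
  exact B.le_opNorm x


theorem normA_apply_le_of_sip_symm (hAB : A = B† ∘L B) {R : V →L[ℂ] V}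
    (hR : ∀ x y, sip A (R x) y = sip A x (R y)) (x : V) : normA A (R x) ≤ ‖R‖ * normA A x := by
  have hstep : ∀ k, normA A ((R ^ k) x) ^ 2 ≤ normA A x * normA A ((R ^ (k * 2)) x) := by
    intro k
    rw [← norm_sip_self hAB, sip_pow_apply_left hR, mul_two, pow_add]
    exact norm_sip_le hAB _ _
  have hbound : ∀ k, 0 < k → normA A ((R ^ k) x) ≤ ‖B‖ * ‖x‖ * ‖R‖ ^ k := fun k hk =>
    calc normA A ((R ^ k) x) ≤ ‖B‖ * ‖(R ^ k) x‖ := normA_le hAB _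
      _ ≤ ‖B‖ * (‖R‖ ^ k * ‖x‖) := by
        gcongr
        exact ((R ^ k).le_opNorm x).trans (by gcongr; exact norm_pow_le' R hk)
      _ = ‖B‖ * ‖x‖ * ‖R‖ ^ k := by ring
  have := le_mul_of_sq_le_mul_succ (u := fun n => normA A ((R ^ 2 ^ n) x))
    (fun n => normA_nonneg A _) (normA_nonneg A x) (norm_nonneg R)
    (fun n => by simpa only [pow_succ] using hstep (2 ^ n)) (fun n => hbound _ (by positivity))
  simpa [mul_comm] using this

theorem exists_normA_apply_le_of_sip_adjoint (hAB : A = B† ∘L B) {T W : V →L[ℂ] V}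
    (hTW : ∀ x y, sip A (T x) y = sip A x (W y)) :
    ∃ C, ∀ x, normA A (T x) ≤ C * normA A x := by
  have hR : ∀ x y, sip A ((W ∘L T) x) y = sip A x ((W ∘L T) y) := fun x y =>
    calc sip A (W (T x)) y = conj (sip A y (W (T x))) := (conj_sip hAB _ _).symm
      _ = conj (sip A (T y) (T x)) := by rw [hTW]
      _ = sip A (T x) (T y) := conj_sip hAB _ _
      _ = sip A x (W (T y)) := hTW _ _
  refine ⟨√‖W ∘L T‖, fun x => ?_⟩
  have hsq : normA A (T x) ^ 2 ≤ (√‖W ∘L T‖ * normA A x) ^ 2 := by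
    rw [mul_pow, Real.sq_sqrt (norm_nonneg _), ← norm_sip_self hAB, hTW]
    calc ‖sip A x (W (T x))‖ ≤ normA A x * normA A ((W ∘L T) x) := norm_sip_le hAB _ _
      _ ≤ normA A x * (‖W ∘L T‖ * normA A x) := by
        gcongr
        · exact normA_nonneg A x
        · exact normA_apply_le_of_sip_symm hAB hR x
      _ = ‖W ∘L T‖ * normA A x ^ 2 := by ring
  exact (pow_le_pow_iff_left₀ (normA_nonneg A _)
    (mul_nonneg (Real.sqrt_nonneg _) (normA_nonneg A x)) two_ne_zero).1 hsq

theorem norm_sip_le_wqA (hAB : A = B† ∘L B) {T : V →L[ℂ] V} {C : ℝ}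
    (hT : ∀ x, normA A (T x) ≤ C * normA A x) {q : ℂ} {x y : V} (hx : normA A x = 1)
    (hy : normA A y = 1) (hxy : sip A x y = q) : ‖sip A (T x) y‖ ≤ wqA A T q := by
  refine le_csSup ⟨C, ?_⟩ ⟨x, y, hx, hy, hxy, rfl⟩
  rintro _ ⟨x, y, hx, hy, -, rfl⟩
  calc ‖sip A (T x) y‖ ≤ normA A (T x) * normA A y := norm_sip_le hAB _ _
    _ ≤ C := by simpa [hx, hy] using hT x

theorem one_lt_rank_range_of_eq_adjoint_comp (hAB : A = B† ∘L B)
    (hA : 1 < Module.rank ℂ (LinearMap.range (A : V →ₗ[ℂ] V))) :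
    1 < Module.rank ℂ (LinearMap.range (B : V →ₗ[ℂ] E)) := by
  have h := lift_rank_map_le (B† : E →ₗ[ℂ] V) (LinearMap.range (B : V →ₗ[ℂ] E))
  rw [← LinearMap.range_comp, ← ContinuousLinearMap.toLinearMap_comp, ← hAB] at h
  simpa using (Cardinal.lift_lt.2 hA).trans_le h

theorem exists_normA_eq_one_sip_eq_zero (hAB : A = B† ∘L B)
    (hB : 1 < Module.rank ℂ (LinearMap.range (B : V →ₗ[ℂ] E))) (e : V) :
    ∃ f, normA A f = 1 ∧ sip A e f = 0 := by
  set K := LinearMap.range (B : V →ₗ[ℂ] E)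
  let u : K := ⟨B e, e, rfl⟩
  have hspan : (ℂ ∙ u) ≠ ⊤ := fun h => by
    have := rank_span_le (R := ℂ) ({u} : Set K)
    rw [h, rank_top] at this
    exact absurd (hB.trans_le (this.trans (by simp))) (lt_irrefl _)
  obtain ⟨z, hz, hz0⟩ := Submodule.exists_mem_ne_zero_of_ne_bot
    (Submodule.orthogonal_eq_bot_iff.not.2 hspan)
  set y : K := (‖z‖⁻¹ : ℂ) • z
  have hy : ‖y‖ = 1 := norm_smul_inv_norm hz0
  have hyu : ⟪y, u⟫_ℂ = 0 := by
    rw [inner_smul_left, Submodule.mem_orthogonal_singleton_iff_inner_left.1 hz, mul_zero]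
  obtain ⟨f, hf⟩ := y.2
  rw [ContinuousLinearMap.coe_coe] at hf
  refine ⟨f, ?_, ?_⟩
  · rwa [normA_eq_norm hAB, hf]
  · rwa [sip_eq_inner hAB, hf]

theorem normA_add_sq_add_normA_sub_sq (hAB : A = B† ∘L B) (u v : V) :
    normA A (u + v) ^ 2 + normA A (u - v) ^ 2 = 2 * (normA A u ^ 2 + normA A v ^ 2) := by
  simpa only [sq, normA_eq_norm hAB, map_add, map_sub] using
    parallelogram_law_with_norm ℂ (B u) (B v)

theorem norm_sip_le_of_norm_sip_self_le (hAB : A = B† ∘L B) {T : V →L[ℂ] V} {m : ℝ}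
    (hdiag : ∀ z, ‖sip A (T z) z‖ ≤ m * normA A z ^ 2) (u v : V) :
    ‖sip A (T u) v‖ ≤ m * (normA A u ^ 2 + normA A v ^ 2) := by
  have hinner : ∀ x y, ‖sip A (T x) y‖ = ‖⟪(A ∘L T) x, y⟫_ℂ‖ := fun x y => by
    rw [sip, ← inner_conj_symm, Complex.norm_conj, ContinuousLinearMap.comp_apply]
  have hdiag' : ∀ z, ‖⟪(A ∘L T) z, z⟫_ℂ‖ ≤ m * normA A z ^ 2 := fun z => hinner z z ▸ hdiag z
  have hIv : normA A (Complex.I • v) = normA A v := by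
    rw [normA_smul hAB, Complex.norm_I, one_mul]
  have hpol := inner_map_polarization' ((A ∘L T : V →L[ℂ] V) : V →ₗ[ℂ] V) u v
  simp only [ContinuousLinearMap.coe_coe] at hpol
  rw [hinner, hpol, norm_div, Complex.norm_ofNat]
  calc _ ≤ (‖⟪(A ∘L T) (u + v), u + v⟫_ℂ‖ + ‖⟪(A ∘L T) (u - v), u - v⟫_ℂ‖ +
          ‖⟪(A ∘L T) (u + Complex.I • v), u + Complex.I • v⟫_ℂ‖ +
          ‖⟪(A ∘L T) (u - Complex.I • v), u - Complex.I • v⟫_ℂ‖) / 4 := by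
        gcongr
        refine (norm_add_le _ _).trans (add_le_add ((norm_sub_le _ _).trans
          (add_le_add (norm_sub_le _ _) ?_)) ?_) <;> rw [norm_mul, Complex.norm_I, one_mul]
    _ ≤ m * (normA A (u + v) ^ 2 + normA A (u - v) ^ 2 + normA A (u + Complex.I • v) ^ 2 +
          normA A (u - Complex.I • v) ^ 2) / 4 := by
        gcongr ?_ / 4
        linarith [hdiag' (u + v), hdiag' (u - v), hdiag' (u + Complex.I • v),
          hdiag' (u - Complex.I • v)]
    _ = m * (normA A u ^ 2 + normA A v ^ 2) := by
        rw [add_assoc _ (normA A (u + Complex.I • v) ^ 2), normA_add_sq_add_normA_sub_sq hAB,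
          normA_add_sq_add_normA_sub_sq hAB, hIv]
        ring

theorem exists_normA_eq_one_eq_smul (hAB : A = B† ∘L B) {z : V} (hz : normA A z ≠ 0) :
    ∃ e, normA A e = 1 ∧ z = (normA A z : ℂ) • e := by
  have hz' : (normA A z : ℂ) ≠ 0 := Complex.ofReal_ne_zero.2 hz
  refine ⟨(normA A z : ℂ)⁻¹ • z, ?_, (smul_inv_smul₀ hz' z).symm⟩
  rw [normA_smul hAB, norm_inv, Complex.norm_real, Real.norm_of_nonneg (normA_nonneg A z),
    inv_mul_cancel₀ hz]

theorem norm_sip_self_le_of_normA_eq_one (hAB : A = B† ∘L B) {T : V →L[ℂ] V} {m : ℝ}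
    (hm : ∀ e, normA A e = 1 → ‖sip A (T e) e‖ ≤ m) (z : V) :
    ‖sip A (T z) z‖ ≤ m * normA A z ^ 2 := by
  rcases eq_or_ne (normA A z) 0 with hz | hz
  · simpa [hz] using norm_sip_le hAB (T z) z
  obtain ⟨e, he, hze⟩ := exists_normA_eq_one_eq_smul hAB hz
  calc ‖sip A (T z) z‖ = normA A z ^ 2 * ‖sip A (T e) e‖ := by
        conv_lhs => rw [hze, norm_sip_ofReal_smul, abs_of_nonneg (normA_nonneg A z), ← sq]
    _ ≤ normA A z ^ 2 * m := by gcongr; exact hm e he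
    _ = m * normA A z ^ 2 := mul_comm _ _

theorem norm_sip_le_of_normA_eq_one (hAB : A = B† ∘L B) {T : V →L[ℂ] V} {C : ℝ}
    (hT : ∀ x, normA A (T x) ≤ C * normA A x) {m : ℝ}
    (hm : ∀ e, normA A e = 1 → ‖sip A (T e) e‖ ≤ m) (u v : V) :
    ‖sip A (T u) v‖ ≤ 2 * m * (normA A u * normA A v) := by
  rcases eq_or_ne (normA A u) 0 with hu | hu
  · have hTu : normA A (T u) = 0 := le_antisymm (by simpa [hu] using hT u) (normA_nonneg A _)
    simpa [hu, hTu] using norm_sip_le hAB (T u) v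
  rcases eq_or_ne (normA A v) 0 with hv | hv
  · simpa [hv] using norm_sip_le hAB (T u) v
  obtain ⟨u', hu', hu_eq⟩ := exists_normA_eq_one_eq_smul hAB hu
  obtain ⟨v', hv', hv_eq⟩ := exists_normA_eq_one_eq_smul hAB hv
  calc ‖sip A (T u) v‖ = normA A u * normA A v * ‖sip A (T u') v'‖ := by
        conv_lhs => rw [hu_eq, hv_eq, norm_sip_ofReal_smul, abs_of_nonneg (normA_nonneg A u),
          abs_of_nonneg (normA_nonneg A v)]
    _ ≤ normA A u * normA A v * (m * (1 ^ 2 + 1 ^ 2)) := by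
        have := normA_nonneg A u
        have := normA_nonneg A v
        gcongr
        simpa only [hu', hv'] using norm_sip_le_of_norm_sip_self_le hAB
          (norm_sip_self_le_of_normA_eq_one hAB hm) u' v'
    _ = 2 * m * (normA A u * normA A v) := by ring

theorem norm_mul_norm_sip_self_le_wqA (hAB : A = B† ∘L B)
    (hB : 1 < Module.rank ℂ (LinearMap.range (B : V →ₗ[ℂ] E))) {T : V →L[ℂ] V} {C : ℝ}
    (hT : ∀ x, normA A (T x) ≤ C * normA A x) {q : ℂ} (hq : ‖q‖ ≤ 1) {e : V}
    (he : normA A e = 1) : ‖q‖ * ‖sip A (T e) e‖ ≤ wqA A T q := by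
  obtain ⟨f, hf, hef⟩ := exists_normA_eq_one_sip_eq_zero hAB hB e
  have hee : sip A e e = 1 := by rw [sip_self hAB, he]; norm_num
  have key : ∀ t : ℝ, t ^ 2 = 1 - ‖q‖ ^ 2 →
      ‖q * sip A (T e) e + t * sip A (T e) f‖ ≤ wqA A T q := by
    intro t ht
    have hsip : ∀ x, sip A x (conj q • e + (t : ℂ) • f) = q * sip A x e + t * sip A x f :=
      fun x => by
        rw [sip_add_right, sip_smul_right, sip_smul_right, Complex.conj_conj, Complex.conj_ofReal]
    have hunit : normA A (conj q • e + (t : ℂ) • f) = 1 := by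
      have hBef : ⟪conj q • B e, (t : ℂ) • B f⟫_ℂ = 0 := by
        rw [inner_smul_left, inner_smul_right, ← sip_eq_inner hAB, ← conj_sip hAB, hef,
          map_zero, mul_zero, mul_zero]
      have h2 := norm_add_sq_eq_norm_sq_add_norm_sq_of_inner_eq_zero _ _ hBef
      rw [norm_smul, norm_smul, ← normA_eq_norm hAB, ← normA_eq_norm hAB, he, hf,
        Complex.norm_conj, Complex.norm_real, Real.norm_eq_abs] at h2
      rw [normA_eq_norm hAB, map_add, map_smul, map_smul]
      nlinarith [norm_nonneg (conj q • B e + (t : ℂ) • B f), abs_mul_abs_self t]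
    rw [← hsip]
    refine norm_sip_le_wqA hAB hT he hunit ?_
    rw [hsip, hee, hef, mul_one, mul_zero, add_zero]
  set s := √(1 - ‖q‖ ^ 2)
  have hs : s ^ 2 = 1 - ‖q‖ ^ 2 := Real.sq_sqrt (by nlinarith [norm_nonneg q])
  have h₁ := key s hs
  have h₂ := key (-s) (by rwa [neg_sq])
  rw [Complex.ofReal_neg, neg_mul, ← sub_eq_add_neg] at h₂
  have h := norm_add_le (q * sip A (T e) e + s * sip A (T e) f)
    (q * sip A (T e) e - s * sip A (T e) f)
  rw [add_add_sub_cancel, ← two_mul, norm_mul, norm_mul, Complex.norm_two] at h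
  linarith

theorem norm_sip_le_two_mul_wqA_div (hAB : A = B† ∘L B)
    (hB : 1 < Module.rank ℂ (LinearMap.range (B : V →ₗ[ℂ] E))) {T : V →L[ℂ] V} {C : ℝ}
    (hT : ∀ x, normA A (T x) ≤ C * normA A x) {q : ℂ} (hq0 : q ≠ 0) (hq : ‖q‖ ≤ 1) (u v : V) :
    ‖sip A (T u) v‖ ≤ 2 * (wqA A T q / ‖q‖) * (normA A u * normA A v) :=
  norm_sip_le_of_normA_eq_one hAB hT (fun _ he => (le_div_iff₀' (norm_pos_iff.2 hq0)).2
    (norm_mul_norm_sip_self_le_wqA hAB hB hT hq he)) u v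

theorem normA_apply_le_of_norm_sip_le (hAB : A = B† ∘L B) {T : V →L[ℂ] V} {c : ℝ} (hc : 0 ≤ c)
    (h : ∀ u v, ‖sip A (T u) v‖ ≤ c * (normA A u * normA A v)) (x : V) :
    normA A (T x) ≤ c * normA A x := by
  rcases (normA_nonneg A (T x)).eq_or_lt with h0 | hpos
  · exact h0 ▸ mul_nonneg hc (normA_nonneg A x)
  have := h x (T x)
  rw [norm_sip_self hAB, sq, ← mul_assoc] at this
  exact le_of_mul_le_mul_right this hpos

end SemiInner

theorem ContinuousLinearMap.IsPositive.eq_adjoint_sqrt_comp_sqrt {A : H →L[ℂ] H}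
    (hA : A.IsPositive) : A = (CFC.sqrt A)† ∘L CFC.sqrt A := by
  rw [← ContinuousLinearMap.star_eq_adjoint, (CFC.sqrt_nonneg A).isSelfAdjoint.star_eq]
  exact (CFC.sqrt_mul_sqrt_self A ((ContinuousLinearMap.nonneg_iff_isPositive A).2 hA)).symm

theorem stmt7 (A T S : H →L[ℂ] H) (hA : A.IsPositive)
    (hrank : 2 ≤ Module.rank ℂ (LinearMap.range (A : H →ₗ[ℂ] H)))
    (hadjT : ∃ W : H →L[ℂ] H, ∀ x y : H, sip A (T x) y = sip A x (W y))
    (hadjS : ∃ W : H →L[ℂ] H, ∀ x y : H, sip A (S x) y = sip A x (W y))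
    (q : ℂ) (hq0 : q ≠ 0) (hq : ‖q‖ ≤ 1) :
    ‖q‖ ^ 2 * wqA A (T ∘L S) q ≤ 4 * wqA A T q * wqA A S q := by
  have hAB := hA.eq_adjoint_sqrt_comp_sqrt
  have hB := one_lt_rank_range_of_eq_adjoint_comp hAB (Cardinal.one_lt_two.trans_le hrank)
  obtain ⟨CT, hCT⟩ := hadjT.elim fun _ hW => exists_normA_apply_le_of_sip_adjoint hAB hW
  obtain ⟨CS, hCS⟩ := hadjS.elim fun _ hW => exists_normA_apply_le_of_sip_adjoint hAB hW
  set mT := wqA A T q / ‖q‖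
  set mS := wqA A S q / ‖q‖
  have hmT : 0 ≤ mT := div_nonneg (wqA_nonneg A T q) (norm_nonneg q)
  have hmS : 0 ≤ mS := div_nonneg (wqA_nonneg A S q) (norm_nonneg q)
  have hT := norm_sip_le_two_mul_wqA_div hAB hB hCT hq0 hq
  have hS := normA_apply_le_of_norm_sip_le hAB (by positivity)
    (norm_sip_le_two_mul_wqA_div hAB hB hCS hq0 hq)
  have hTS : wqA A (T ∘L S) q ≤ 4 * mT * mS := wqA_le (by positivity) fun x y hx hy _ =>
    calc ‖sip A (T (S x)) y‖ ≤ 2 * mT * (normA A (S x) * normA A y) := hT _ _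
      _ ≤ 2 * mT * (2 * mS * normA A x * normA A y) := by
        gcongr
        exact hS x
      _ = 4 * mT * mS := by rw [hx, hy]; ring
  calc ‖q‖ ^ 2 * wqA A (T ∘L S) q ≤ ‖q‖ ^ 2 * (4 * mT * mS) := by gcongr
    _ = 4 * wqA A T q * wqA A S q := by simp only [mT, mS]; field_simp
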